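/- arXiv:0910.2477 — 4 statements merged into one kernel-verified Lean document; each statement's English description precedes it below -/
import Mathlib

section
/- Let V be a finite-dimensional real inner product space and q a positive semidefinite quadratic form on V with rank q = dim V − 1. Let v be a unit vector spanning the kernel of q and H = v^⊥. Then for any unit vector u ∈ V, det(q restricted to u^⊥) = ⟨u, v⟩² · det(q restricted to H), where the determinant of a quadratic form on a subspace is computed with respect to any orthonormal basis of that subspace. -/
/-!
Extend orthonormal bases of `u^⊥` and `v^⊥` by `u` and `v`. The Gram matrices `M_u`, `M_v` of the
form in the extended bases satisfy `M_u = Tᵀ M_v T` with `T` the orthogonal change-of-basis matrix,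
and the two determinants are the last diagonal cofactors, i.e. the `(u, u)` and `(v, v)` entries of
the adjugates. For a semidefinite form `q v = 0` puts `v` in the radical (Cauchy–Schwarz), so the
last row and column of `M_v` vanish and its adjugate is supported on the `(v, v)` entry; then
`adj (Tᵀ M T) = Tᵀ (adj M) T` turns that entry into `T_vv ^ 2 = ⟪u, v⟫ ^ 2` times it.
-/

namespace Matrix

variable {ι n R : Type*} [Fintype ι] [DecidableEq ι] [Fintype n] [DecidableEq n] [CommRing R]

theorem adjugate_inr_inr (A : Matrix (ι ⊕ Unit) (ι ⊕ Unit) R) :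
    A.adjugate (.inr ()) (.inr ()) = (A.submatrix Sum.inl Sum.inl).det := by
  have h : A.updateRow (.inr ()) (Pi.single (.inr ()) 1) =
      fromBlocks (A.submatrix Sum.inl Sum.inl) (of fun i _ => A (.inl i) (.inr ())) 0 1 := by
    ext (i | i) (j | j) <;> simp [updateRow_apply]
  rw [adjugate_apply, h, det_fromBlocks_zero₂₁]
  simp [det_unique]

theorem adjugate_transpose_mul_mul {T : Matrix n n R} (hT : Tᵀ * T = 1) (M : Matrix n n R) :
    adjugate (Tᵀ * M * T) = Tᵀ * adjugate M * T := by
  have hdet : T.det * T.det = 1 := by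
    simpa only [det_mul, det_transpose, det_one] using congrArg det hT
  have hadj : adjugate T = T.det • Tᵀ := by
    calc adjugate T = adjugate T * (T * Tᵀ) := by rw [mul_eq_one_comm.mp hT, mul_one]
      _ = T.det • Tᵀ := by rw [← mul_assoc, adjugate_mul, smul_mul, one_mul]
  rw [adjugate_mul_distrib, adjugate_mul_distrib, ← adjugate_transpose, hadj, transpose_smul,
    transpose_transpose]
  simp only [smul_mul, Matrix.mul_smul, smul_smul, hdet, one_smul, mul_assoc]

theorem adjugate_eq_single_of_row_col_eq_zero {M : Matrix n n R} {r : n}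
    (hrow : ∀ j, M r j = 0) (hcol : ∀ i, M i r = 0) :
    adjugate M = single r r (adjugate M r r) := by
  ext i j
  rw [single_apply]
  split_ifs with hij
  · obtain ⟨rfl, rfl⟩ := hij
    rfl
  rw [adjugate_apply]
  by_cases hj : j = r
  · subst hj
    have hi : i ≠ j := fun h => hij ⟨h.symm, rfl⟩
    refine det_eq_zero_of_column_eq_zero j fun k => ?_
    rw [updateRow_apply]
    split_ifs <;> simp_all
  · refine det_eq_zero_of_row_eq_zero r fun k => ?_
    rw [updateRow_apply, if_neg (Ne.symm hj), hrow]

theorem transpose_mul_single_mul_apply (T : Matrix n n R) (r : n) (c : R) :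
    (Tᵀ * single r r c * T) r r = T r r * c * T r r := by
  simp [mul_apply, single_apply, ite_and, Finset.sum_ite_eq]

end Matrix

open scoped InnerProductSpace

theorem OrthonormalBasis.exists_sum_unit_extension {𝕜 V ι : Type*} [RCLike 𝕜]
    [NormedAddCommGroup V] [InnerProductSpace 𝕜 V] [Fintype ι] {u : V} (hu : ‖u‖ = 1)
    (b : OrthonormalBasis ι 𝕜 (𝕜 ∙ u)ᗮ) :
    ∃ e : OrthonormalBasis (ι ⊕ Unit) 𝕜 V,
      (∀ i, e (.inl i) = b i) ∧ e (.inr ()) = u := by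
  classical
  let f : ι ⊕ Unit → V := Sum.elim (fun i => b i) fun _ => u
  have hbu (i : ι) : ⟪(b i : V), u⟫_𝕜 = 0 :=
    Submodule.mem_orthogonal_singleton_iff_inner_left.1 (b i).2
  have hon : Orthonormal 𝕜 f := by
    rw [orthonormal_iff_ite]
    rintro (i | _) (j | _)
    · simpa [f, Submodule.coe_inner] using orthonormal_iff_ite.mp b.orthonormal i j
    · simpa [f] using hbu i
    · simpa [f, inner_eq_zero_symm] using hbu j
    · simp [f, inner_self_eq_norm_sq_to_K, hu]
  have hsp : (Submodule.span 𝕜 (Set.range f))ᗮ = ⊥ := by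
    refine (Submodule.eq_bot_iff _).2 fun x hx => ?_
    have hxf (k) : ⟪f k, x⟫_𝕜 = 0 :=
      Submodule.inner_right_of_mem_orthogonal (Submodule.subset_span (Set.mem_range_self k)) hx
    have hxu : x ∈ (𝕜 ∙ u)ᗮ := Submodule.mem_orthogonal_singleton_iff_inner_right.2 (hxf (.inr ()))
    have : (⟨x, hxu⟩ : (𝕜 ∙ u)ᗮ) = 0 := b.toBasis.ext_elem fun i => by
      simpa [f, b.coe_toBasis_repr_apply, b.repr_apply_apply, Submodule.coe_inner]
        using hxf (.inl i)
    simpa using congrArg Subtype.val this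
  exact ⟨.mkOfOrthogonalEqBot hon hsp, fun i => by simp [f], by simp [f]⟩

open Matrix in
theorem det_gram_orthogonal_span_singleton_eq_inner_sq_mul
    {V ι : Type*} [NormedAddCommGroup V] [InnerProductSpace ℝ V] [Fintype ι] [DecidableEq ι]
    (B : LinearMap.BilinForm ℝ V) (hB : LinearMap.IsSymm B) {u v : V} (hu : ‖u‖ = 1)
    (hv : ‖v‖ = 1) (hvB : v ∈ LinearMap.ker B)
    (bU : OrthonormalBasis ι ℝ (ℝ ∙ u)ᗮ) (bH : OrthonormalBasis ι ℝ (ℝ ∙ v)ᗮ) :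
    (of fun i j => B (bU i) (bU j)).det = ⟪u, v⟫_ℝ ^ 2 * (of fun i j => B (bH i) (bH j)).det := by
  obtain ⟨eU, heU, heU'⟩ := bU.exists_sum_unit_extension hu
  obtain ⟨eH, heH, heH'⟩ := bH.exists_sum_unit_extension hv
  set T := eH.toBasis.toMatrix eU.toBasis
  set MH := LinearMap.BilinForm.toMatrix eH.toBasis B
  have hT : Tᵀ * T = 1 := by
    rw [← conjTranspose_eq_transpose_of_trivial]
    exact eH.toMatrix_orthonormalBasis_conjTranspose_mul_self eU
  have hTrr : T (.inr ()) (.inr ()) = ⟪u, v⟫_ℝ := by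
    simp [T, Module.Basis.toMatrix_apply, OrthonormalBasis.repr_apply_apply, heH', heU',
      real_inner_comm]
  have hMH : adjugate MH = single (.inr ()) (.inr ()) (adjugate MH (.inr ()) (.inr ())) := by
    refine adjugate_eq_single_of_row_col_eq_zero (fun j => ?_) (fun i => ?_)
    · simp [MH, heH', LinearMap.mem_ker.1 hvB]
    · simp [MH, heH', ← hB.eq, LinearMap.mem_ker.1 hvB]
  have hU : (of fun i j => B (bU i) (bU j)) =
      (LinearMap.BilinForm.toMatrix eU.toBasis B).submatrix Sum.inl Sum.inl := by
    ext i j; simp [heU]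
  have hH : (of fun i j => B (bH i) (bH j)) = MH.submatrix Sum.inl Sum.inl := by
    ext i j; simp [MH, heH]
  rw [hU, hH, ← adjugate_inr_inr, ← adjugate_inr_inr,
    ← LinearMap.BilinForm.toMatrix_mul_basis_toMatrix eH.toBasis eU.toBasis,
    adjugate_transpose_mul_mul hT, hMH, transpose_mul_single_mul_apply, hTrr, single_apply_same]
  ring

theorem det_restriction_hyperplane_general
    {V : Type*} [NormedAddCommGroup V] [InnerProductSpace ℝ V]
    (B : V → V → ℝ)
    (hadd₁ : ∀ x y z : V, B (x + y) z = B x z + B y z)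
    (hsmul₁ : ∀ (c : ℝ) (x y : V), B (c • x) y = c * B x y)
    (hsymm : ∀ x y : V, B x y = B y x)
    (hpsd : ∀ x : V, 0 ≤ B x x)
    (v : V) (hv : ‖v‖ = 1)
    (hker : ∀ x : V, B x x = 0 ↔ ∃ c : ℝ, x = c • v)
    (u : V) (hu : ‖u‖ = 1)
    (bU : OrthonormalBasis (Fin (Module.finrank ℝ V - 1)) ℝ ((ℝ ∙ u)ᗮ))
    (bH : OrthonormalBasis (Fin (Module.finrank ℝ V - 1)) ℝ ((ℝ ∙ v)ᗮ)) :
    Matrix.det (Matrix.of fun i j => B (bU i : V) (bU j : V))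
      = (inner ℝ u v : ℝ) ^ 2 * Matrix.det (Matrix.of fun i j => B (bH i : V) (bH j : V)) := by
  let β : LinearMap.BilinForm ℝ V := LinearMap.mk₂ ℝ B hadd₁ hsmul₁
    (fun x y z => by rw [hsymm, hadd₁, hsymm y, hsymm z])
    (fun c x y => by rw [hsymm, hsmul₁, hsymm y, smul_eq_mul])
  have hβ : LinearMap.IsSymm β := ⟨hsymm⟩
  have hvβ : v ∈ LinearMap.ker β :=
    (β.apply_apply_same_eq_zero_iff hpsd hβ).1 ((hker v).2 ⟨1, (one_smul ℝ v).symm⟩)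
  exact det_gram_orthogonal_span_singleton_eq_inner_sq_mul β hβ hu hv hvβ bU bH

/-- Let `B` be a positive semidefinite symmetric bilinear form on a finite-dimensional real
inner product space `V`, whose kernel is spanned by a unit vector `v` (so the rank of the
associated quadratic form is `dim V − 1`).  Let `H = v^⊥`.  Then for any unit vector `u`,
the determinant of the restriction of the form to `u^⊥` (computed in any orthonormal basis)
equals `⟨u,v⟩²` times the determinant of the restriction to `H`. -/
theorem det_restriction_hyperplane
    {V : Type*} [NormedAddCommGroup V] [InnerProductSpace ℝ V] [FiniteDimensional ℝ V]
    (B : V → V → ℝ)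
    (hadd₁ : ∀ x y z : V, B (x + y) z = B x z + B y z)
    (hsmul₁ : ∀ (c : ℝ) (x y : V), B (c • x) y = c * B x y)
    (hsymm : ∀ x y : V, B x y = B y x)
    (hpsd : ∀ x : V, 0 ≤ B x x)
    (v : V) (hv : ‖v‖ = 1)
    (hker : ∀ x : V, B x x = 0 ↔ ∃ c : ℝ, x = c • v)
    (u : V) (hu : ‖u‖ = 1)
    (bU : OrthonormalBasis (Fin (Module.finrank ℝ V - 1)) ℝ ((ℝ ∙ u)ᗮ))
    (bH : OrthonormalBasis (Fin (Module.finrank ℝ V - 1)) ℝ ((ℝ ∙ v)ᗮ)) :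
    Matrix.det (Matrix.of fun i j => B (bU i : V) (bU j : V))
      = (inner ℝ u v : ℝ) ^ 2 * Matrix.det (Matrix.of fun i j => B (bH i : V) (bH j : V)) :=
  det_restriction_hyperplane_general B hadd₁ hsmul₁ hsymm hpsd v hv hker u hu bU bH
end

section
/- Let q₀(s,t) = (1/2)·Σ_{j,k} (s_j + t_k)² on ℝ^{m+n}, let u = (1,…,1; −1,…,−1), and let H = u^⊥. Then the determinant of the restriction of q₀ to H equals (m/2)^{n−1} · (n/2)^{m−1} · (m+n)/2. -/
/-!
Adding the rank-one term `½⟨u, ·⟩²` to `q₀` changes nothing on `H = u^⊥`, and it turns `q₀` into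
the block-diagonal form `½ (n‖s‖² + (Σ s)²) + ½ (m‖t‖² + (Σ t)²)`, whose matrix has `u` as an
eigenvector with eigenvalue `(m + n)/2` and whose blocks are "multiple of `1` plus constant"
matrices with explicit determinants. Completing an orthonormal basis of `H` by `u/‖u‖` makes the
matrix of this form block triangular, so its determinant is `det (q₀|H) · (m + n)/2`.
-/

open Matrix Finset
open scoped RealInnerProductSpace

namespace Matrix

variable {ι K : Type*} [Fintype ι] [DecidableEq ι]

theorem det_smul_one_add_const [Field K] [Nonempty ι] {a : K} (ha : a ≠ 0) (c : K) :
    (a • 1 + of fun _ _ : ι => c).det = a ^ (Fintype.card ι - 1) * (a + Fintype.card ι * c) := by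
  have hrank_one : (a • 1 + of fun _ _ : ι => c) =
      a • (1 + replicateCol Unit (fun _ : ι => c / a) *
        replicateRow Unit (fun _ : ι => (1 : K))) := by
    ext i j
    simp [mul_add, Matrix.mul_apply, mul_div_cancel₀ _ ha]
  have hcard : Fintype.card ι = Fintype.card ι - 1 + 1 :=
    (Nat.sub_add_cancel Fintype.card_pos).symm
  rw [hrank_one, det_smul, det_one_add_replicateCol_mul_replicateRow]
  nth_rw 1 [hcard]
  simp only [dotProduct, one_mul, sum_const, card_univ, nsmul_eq_mul]
  field_simp
  ring

theorem dotProduct_smul_one_add_const_mulVec [CommSemiring K] (a c : K) (v w : ι → K) :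
    w ⬝ᵥ ((a • 1 + of fun _ _ : ι => c) *ᵥ v) = a * (w ⬝ᵥ v) + c * (∑ i, w i) * ∑ i, v i := by
  simp only [add_mulVec, smul_mulVec, one_mulVec, dotProduct_add, dotProduct_smul, smul_eq_mul]
  simp [mulVec, dotProduct, Finset.mul_sum, mul_left_comm, mul_comm]

theorem det_toEuclideanLin {𝕜 : Type*} [RCLike 𝕜] (A : Matrix ι ι 𝕜) :
    LinearMap.det (toEuclideanLin A) = A.det := by
  rw [toEuclideanLin, toLpLin_eq_toLin, LinearMap.det_toLin]

end Matrix

theorem Finset.sum_sum_add_mul_add {ι κ R : Type*} [Fintype ι] [Fintype κ] [CommSemiring R]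
    (s s' : ι → R) (t t' : κ → R) :
    ∑ j, ∑ k, (s j + t k) * (s' j + t' k) =
      Fintype.card κ * (s ⬝ᵥ s') + (∑ j, s j) * (∑ k, t' k) + (∑ k, t k) * (∑ j, s' j)
        + Fintype.card ι * (t ⬝ᵥ t') := by
  simp only [add_mul, mul_add, Finset.sum_add_distrib, dotProduct, Finset.sum_mul_sum]
  rw [Finset.sum_comm (f := fun j k => t k * s' j)]
  simp only [sum_const, card_univ, nsmul_eq_mul, mul_sum]
  ring

section OrthogonalSpanSingleton

variable {E ι : Type*} [NormedAddCommGroup E] [InnerProductSpace ℝ E] [Fintype ι]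

theorem OrthonormalBasis.exists_sumElim_orthogonal_span_singleton {u : E} (hu : u ≠ 0)
    (b : OrthonormalBasis ι ℝ (ℝ ∙ u)ᗮ) :
    ∃ C : OrthonormalBasis (ι ⊕ Unit) ℝ E,
      ⇑C = Sum.elim (fun i => (b i : E)) fun _ => ‖u‖⁻¹ • u := by
  classical
  have hbu : ∀ i, ⟪u, (b i : E)⟫ = 0 := fun i =>
    Submodule.mem_orthogonal_singleton_iff_inner_right.mp (b i).2
  have hon : Orthonormal ℝ (Sum.elim (fun i => (b i : E)) fun _ : Unit => ‖u‖⁻¹ • u) := by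
    rw [orthonormal_iff_ite]
    rintro (i | ⟨⟩) (j | ⟨⟩)
    · simpa [Submodule.coe_inner] using orthonormal_iff_ite.mp b.orthonormal i j
    · simp [inner_smul_right, real_inner_comm, hbu]
    · simp [inner_smul_left, hbu]
    · simp [norm_smul, hu]
  refine ⟨.mkOfOrthogonalEqBot hon ?_, OrthonormalBasis.coe_of_orthogonal_eq_bot_mk _ _⟩
  rw [Submodule.eq_bot_iff]
  intro x hx
  have hxC : ∀ i, ⟪Sum.elim (fun i => (b i : E)) (fun _ : Unit => ‖u‖⁻¹ • u) i, x⟫ = 0 :=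
    fun i => Submodule.inner_right_of_mem_orthogonal
      (Submodule.subset_span (Set.mem_range_self i)) hx
  have hxu : x ∈ (ℝ ∙ u)ᗮ := by
    rw [Submodule.mem_orthogonal_singleton_iff_inner_right]
    simpa [inner_smul_left, hu] using hxC (.inr ())
  have hrepr : b.repr ⟨x, hxu⟩ = 0 := by
    ext i
    simpa [OrthonormalBasis.repr_apply_apply, Submodule.coe_inner] using hxC (.inl i)
  simpa using hrepr

theorem LinearMap.det_eq_det_compression_mul [DecidableEq ι] (f : E →ₗ[ℝ] E) {u : E}
    (hu : u ≠ 0) {c : ℝ} (hf : ∀ x, ⟪u, f x⟫ = c * ⟪u, x⟫) (b : OrthonormalBasis ι ℝ (ℝ ∙ u)ᗮ) :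
    LinearMap.det f = (Matrix.of fun i j => ⟪(b i : E), f (b j)⟫).det * c := by
  obtain ⟨C, hC⟩ := b.exists_sumElim_orthogonal_span_singleton hu
  have hbu : ∀ i, ⟪u, (b i : E)⟫ = 0 := fun i =>
    Submodule.mem_orthogonal_singleton_iff_inner_right.mp (b i).2
  have hblock : toMatrix C.toBasis C.toBasis f = fromBlocks (of fun i j => ⟪(b i : E), f (b j)⟫)
      (of fun i _ => ‖u‖⁻¹ * ⟪(b i : E), f u⟫) 0 (of fun _ _ => c) := by
    ext (i | ⟨⟩) (j | ⟨⟩) <;>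
      simp [toMatrix_apply, OrthonormalBasis.repr_apply_apply, hC, inner_smul_left, hf, hbu]
    field_simp
  rw [← LinearMap.det_toMatrix C.toBasis, hblock, det_fromBlocks_zero₂₁,
    det_unique (of fun _ _ : Unit => c), of_apply]

end OrthogonalSpanSingleton

section Q0

variable {m n : ℕ}

def signVec (m n : ℕ) : EuclideanSpace ℝ (Fin m ⊕ Fin n) :=
  WithLp.toLp 2 (fun i => Sum.elim (fun _ => (1 : ℝ)) (fun _ => (-1 : ℝ)) i)

noncomputable def q0Bilin (m n : ℕ) (x y : EuclideanSpace ℝ (Fin m ⊕ Fin n)) : ℝ :=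
  (1 / 2 : ℝ) * ∑ j, ∑ k, (x (Sum.inl j) + x (Sum.inr k)) * (y (Sum.inl j) + y (Sum.inr k))

/-- The matrix of `q₀ + ½⟨u, ·⟩²`. -/
noncomputable def q0ShiftMatrix (m n : ℕ) : Matrix (Fin m ⊕ Fin n) (Fin m ⊕ Fin n) ℝ :=
  fromBlocks (((n : ℝ) / 2) • 1 + of fun _ _ => 1 / 2) 0 0
    (((m : ℝ) / 2) • 1 + of fun _ _ => 1 / 2)

theorem inner_signVec (x : EuclideanSpace ℝ (Fin m ⊕ Fin n)) :
    ⟪signVec m n, x⟫ = ∑ j, x (.inl j) - ∑ k, x (.inr k) := by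
  simp only [signVec, EuclideanSpace.inner_eq_star_dotProduct, dotProduct, Pi.star_apply,
    star_trivial, Fintype.sum_sum_type, Sum.elim_inl, mul_one, Sum.elim_inr, mul_neg,
    sum_neg_distrib]
  ring

theorem inner_signVec_self : ⟪signVec m n, signVec m n⟫ = m + n := by
  rw [inner_signVec]
  simp [signVec]

theorem signVec_ne_zero (h : 0 < m + n) : signVec m n ≠ 0 := by
  intro h0
  have hself := inner_signVec_self (m := m) (n := n)
  rw [h0, inner_zero_left] at hself
  have : (0 : ℝ) < m + n := by exact_mod_cast h
  linarith

theorem q0Bilin_signVec_left (x : EuclideanSpace ℝ (Fin m ⊕ Fin n)) :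
    q0Bilin m n (signVec m n) x = 0 := by
  simp [q0Bilin, signVec]

theorem inner_toEuclideanLin_q0ShiftMatrix (x y : EuclideanSpace ℝ (Fin m ⊕ Fin n)) :
    ⟪x, toEuclideanLin (q0ShiftMatrix m n) y⟫ =
      q0Bilin m n x y + 1 / 2 * ⟪signVec m n, x⟫ * ⟪signVec m n, y⟫ := by
  rw [EuclideanSpace.inner_eq_star_dotProduct, star_trivial, ofLp_toLpLin, toLin'_apply,
    q0ShiftMatrix, dotProduct_comm, ← Sum.elim_comp_inl_inr x.ofLp, fromBlocks_mulVec,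
    sumElim_dotProduct_sumElim, inner_signVec, inner_signVec, q0Bilin]
  simp only [zero_mulVec, add_zero, zero_add, dotProduct_smul_one_add_const_mulVec,
    Finset.sum_sum_add_mul_add, Fintype.card_fin]
  simp only [dotProduct, Function.comp_apply, one_div]
  ring

theorem inner_signVec_toEuclideanLin_q0ShiftMatrix (x : EuclideanSpace ℝ (Fin m ⊕ Fin n)) :
    ⟪signVec m n, toEuclideanLin (q0ShiftMatrix m n) x⟫ = (m + n) / 2 * ⟪signVec m n, x⟫ := by
  rw [inner_toEuclideanLin_q0ShiftMatrix, q0Bilin_signVec_left, inner_signVec_self]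
  ring

theorem det_q0ShiftMatrix (hm : 1 ≤ m) (hn : 1 ≤ n) :
    (q0ShiftMatrix m n).det =
      ((n : ℝ) / 2) ^ (m - 1) * ((m + n) / 2) * (((m : ℝ) / 2) ^ (n - 1) * ((m + n) / 2)) := by
  have : NeZero m := ⟨by omega⟩
  have : NeZero n := ⟨by omega⟩
  have hm0 : (m : ℝ) / 2 ≠ 0 := by positivity
  have hn0 : (n : ℝ) / 2 ≠ 0 := by positivity
  rw [q0ShiftMatrix, det_fromBlocks_zero₂₁, det_smul_one_add_const hn0, det_smul_one_add_const hm0]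
  simp only [Fintype.card_fin, one_div]
  ring

end Q0

/-- Let `q₀(s,t) = (1/2)Σ_{j,k}(s_j+t_k)²` on `ℝ^{m+n}` with associated symmetric bilinear
form `B`, let `u = (1,…,1; −1,…,−1)` and `H = u^⊥`.  Then the determinant of the matrix of
the restriction of `q₀` to `H` in any orthonormal basis of `H` equals
`(m/2)^{n−1}·(n/2)^{m−1}·(m+n)/2`. -/
theorem det_q0_restricted (m n : ℕ) (hm : 1 ≤ m) (hn : 1 ≤ n)
    (u : EuclideanSpace ℝ (Fin m ⊕ Fin n))
    (hu : u = WithLp.toLp 2 (fun i => Sum.elim (fun _ => (1 : ℝ)) (fun _ => (-1 : ℝ)) i))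
    (B : EuclideanSpace ℝ (Fin m ⊕ Fin n) → EuclideanSpace ℝ (Fin m ⊕ Fin n) → ℝ)
    (hB : ∀ x y, B x y = (1 / 2 : ℝ) * ∑ j, ∑ k,
      (x (Sum.inl j) + x (Sum.inr k)) * (y (Sum.inl j) + y (Sum.inr k)))
    (b : OrthonormalBasis (Fin (m + n - 1)) ℝ ((ℝ ∙ u)ᗮ)) :
    Matrix.det (Matrix.of fun i j => B (b i : EuclideanSpace ℝ (Fin m ⊕ Fin n))
        (b j : EuclideanSpace ℝ (Fin m ⊕ Fin n)))
      = ((m : ℝ) / 2) ^ (n - 1) * ((n : ℝ) / 2) ^ (m - 1) * (((m : ℝ) + n) / 2) := by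
  obtain rfl : u = signVec m n := hu
  obtain rfl : B = q0Bilin m n := funext fun x => funext (hB x)
  have hbu : ∀ i, ⟪signVec m n, (b i : EuclideanSpace ℝ (Fin m ⊕ Fin n))⟫ = 0 := fun i =>
    Submodule.mem_orthogonal_singleton_iff_inner_right.mp (b i).2
  have hgram : (of fun i j => q0Bilin m n (b i) (b j)) =
      of fun i j => ⟪(b i : EuclideanSpace ℝ (Fin m ⊕ Fin n)),
        toEuclideanLin (q0ShiftMatrix m n) (b j)⟫ := by
    ext i j
    rw [of_apply, of_apply, inner_toEuclideanLin_q0ShiftMatrix, hbu, hbu]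
    ring
  have hdet := LinearMap.det_eq_det_compression_mul _ (signVec_ne_zero (by omega))
    inner_signVec_toEuclideanLin_q0ShiftMatrix b
  rw [det_toEuclideanLin, ← hgram, det_q0ShiftMatrix hm hn] at hdet
  have hmn : ((m : ℝ) + n) / 2 ≠ 0 := by positivity
  apply mul_right_cancel₀ hmn
  linear_combination -hdet
end

section
/- Let M : ℝ^{m+n} → ℝ^{mn} be the linear map sending (s₁,…,s_m; t₁,…,t_n) to the vector with entries s_j + t_k for 1 ≤ j ≤ m, 1 ≤ k ≤ n. Let H ⊂ ℝ^{m+n} be the hyperplane defined by Σ_j s_j = Σ_k t_k. Then ‖M x‖² ≥ min(m, n) · ‖x‖² for all x ∈ H. -/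
/-! Expanding the square, `Σ_{j,k} (s_j + t_k)² = n Σ s_j² + 2 (Σ s_j)(Σ t_k) + m Σ t_k²`;
on `H` the cross term is `2 (Σ s_j)² ≥ 0`, and the other two terms are each at least
`min(m,n)` times their sum of squares. -/

open Finset

theorem sum_sum_add_sq {ι κ : Type*} [Fintype ι] [Fintype κ] (s : ι → ℝ) (t : κ → ℝ) :
    ∑ j, ∑ k, (s j + t k) ^ 2
      = Fintype.card κ * ∑ j, s j ^ 2 + 2 * (∑ j, s j) * (∑ k, t k)
        + Fintype.card ι * ∑ k, t k ^ 2 := by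
  simp only [add_sq, sum_add_distrib, sum_const, card_univ, nsmul_eq_mul, ← mul_sum, ← sum_mul]

theorem M_norm_lower_bound_general (m n : ℕ)
    (s : Fin m → ℝ) (t : Fin n → ℝ) (h : ∑ j, s j = ∑ k, t k) :
    (min m n : ℝ) * ((∑ j, (s j) ^ 2) + ∑ k, (t k) ^ 2)
      ≤ ∑ j, ∑ k, (s j + t k) ^ 2 := by
  rw [sum_sum_add_sq, ← h, Fintype.card_fin, Fintype.card_fin]
  have hs : (min m n : ℝ) * ∑ j, s j ^ 2 ≤ n * ∑ j, s j ^ 2 :=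
    mul_le_mul_of_nonneg_right (by exact_mod_cast min_le_right m n) (by positivity)
  have ht : (min m n : ℝ) * ∑ k, t k ^ 2 ≤ m * ∑ k, t k ^ 2 :=
    mul_le_mul_of_nonneg_right (by exact_mod_cast min_le_left m n) (by positivity)
  linarith [mul_self_nonneg (∑ j, s j)]

/-- Let `M : ℝ^{m+n} → ℝ^{mn}` send `(s,t)` to `(s_j + t_k)_{j,k}`, and let `H` be the
hyperplane `Σ_j s_j = Σ_k t_k`.  Then `‖Mx‖² ≥ min(m,n)·‖x‖²` for all `x ∈ H`, i.e.
`Σ_{j,k} (s_j + t_k)² ≥ min(m,n)·(Σ_j s_j² + Σ_k t_k²)`. -/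
theorem M_norm_lower_bound (m n : ℕ) (hm : 0 < m) (hn : 0 < n)
    (s : Fin m → ℝ) (t : Fin n → ℝ) (h : ∑ j, s j = ∑ k, t k) :
    (min m n : ℝ) * ((∑ j, (s j) ^ 2) + ∑ k, (t k) ^ 2)
      ≤ ∑ j, ∑ k, (s j + t k) ^ 2 :=
  M_norm_lower_bound_general m n s t h
end

section
/- Fix margins R, C and the typical matrix Z = (ζ_{jk}) maximizing g on P(R,C), and suppose δτ ≤ ζ_{jk} ≤ τ for all j, k with 0 < δ < 1/2, τ > 1. Let 0 < ε < 1/2 and let R', C' be margins with (1−ε)r_j ≤ r_j' ≤ r_j and (1−ε)c_k ≤ c_k' ≤ c_k and Σ r_j' = Σ c_k', with typical matrix X for (R',C'). Then g((1−ε)Z) ≤ g(X) ≤ g(Z). -/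
/-- The entropy-like functional `g(X) = Σ_{j,k}((x_{jk}+1)ln(x_{jk}+1) − x_{jk}ln x_{jk})`
of a matrix. -/
noncomputable def gFun {m n : ℕ} (X : Matrix (Fin m) (Fin n) ℝ) : ℝ :=
  ∑ j, ∑ k, ((X j k + 1) * Real.log (X j k + 1) - X j k * Real.log (X j k))

/-- Membership in the transportation polytope `P(R,C)`. -/
def inTP {m n : ℕ} (R : Fin m → ℝ) (C : Fin n → ℝ) (X : Matrix (Fin m) (Fin n) ℝ) : Prop :=
  (∀ j k, 0 ≤ X j k) ∧ (∀ j, ∑ k, X j k = R j) ∧ (∀ k, ∑ j, X j k = C k)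

/-!
Each summand `(x + 1) log (x + 1) - x log x` of `g` is increasing on `[0, ∞)` (its derivative is
`log (x + 1) - log x > 0`), so `g` is monotone in every entry. If the margins grow, `R ≤ R'` and
`C ≤ C'` with `Σ R' = Σ C'`, every matrix of `P(R, C)` is dominated entrywise by a matrix of
`P(R', C')`: add the outer product of the margin increments divided by their common total.
Since `(1 - ε) Z ∈ P((1 - ε) R, (1 - ε) C)` and `(1 - ε) R ≤ R' ≤ R`, `(1 - ε) C ≤ C' ≤ C`,
maximality of `X` and of `Z` give the two inequalities.
-/

open Real Set Finset

lemma monotoneOn_add_one_mul_log_add_one_sub_mul_log :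
    MonotoneOn (fun x : ℝ => (x + 1) * log (x + 1) - x * log x) (Ici 0) := by
  have hcont : ContinuousOn (fun x : ℝ => (x + 1) * log (x + 1) - x * log x) (Ici 0) :=
    ((continuous_mul_log.comp (continuous_add_const 1)).sub continuous_mul_log).continuousOn
  refine (strictMonoOn_of_deriv_pos (convex_Ici 0) hcont fun x hx => ?_).monotoneOn
  rw [interior_Ici] at hx
  have hx0 : 0 < x := hx
  have hderiv : HasDerivAt (fun y : ℝ => (y + 1) * log (y + 1) - y * log y)
      ((log (x + 1) + 1) * 1 - (log x + 1)) x :=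
    ((hasDerivAt_mul_log (by positivity)).comp x ((hasDerivAt_id x).add_const 1)).sub
      (hasDerivAt_mul_log hx0.ne')
  rw [hderiv.deriv]
  linarith [log_lt_log hx0 (lt_add_one x)]

lemma gFun_le_gFun {m n : ℕ} {A B : Matrix (Fin m) (Fin n) ℝ}
    (hA : ∀ j k, 0 ≤ A j k) (hAB : ∀ j k, A j k ≤ B j k) : gFun A ≤ gFun B :=
  sum_le_sum fun j _ => sum_le_sum fun k _ =>
    monotoneOn_add_one_mul_log_add_one_sub_mul_log (hA j k) ((hA j k).trans (hAB j k)) (hAB j k)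

lemma exists_inTP {m n : ℕ} {a : Fin m → ℝ} {b : Fin n → ℝ} (ha : 0 ≤ a) (hb : 0 ≤ b)
    (hab : ∑ j, a j = ∑ k, b k) : ∃ D, inTP a b D := by
  set S := ∑ j, a j with hS
  have hS0 : 0 ≤ S := sum_nonneg fun j _ => ha j
  refine ⟨fun j k => a j * b k / S, fun j k => div_nonneg (mul_nonneg (ha j) (hb k)) hS0,
    fun j => ?_, fun k => ?_⟩ <;> rcases eq_or_ne S 0 with h0 | h0
  · have haj : a j = 0 := (sum_eq_zero_iff_of_nonneg fun i _ => ha i).mp h0 j (mem_univ j)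
    simp [haj]
  · rw [← sum_div, ← mul_sum, ← hab, mul_div_assoc, div_self h0, mul_one]
  · have hbk : b k = 0 := (sum_eq_zero_iff_of_nonneg fun i _ => hb i).mp (hab ▸ h0) k (mem_univ k)
    simp [hbk]
  · rw [← sum_div, ← sum_mul, mul_comm, mul_div_assoc, div_self h0, mul_one]

namespace inTP

variable {m n : ℕ} {R R' : Fin m → ℝ} {C C' : Fin n → ℝ} {A B : Matrix (Fin m) (Fin n) ℝ}

lemma sum_eq_sum (h : inTP R C A) : ∑ j, R j = ∑ k, C k := by
  simp only [← h.2.1, ← h.2.2]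
  exact sum_comm

lemma add (hA : inTP R C A) (hB : inTP R' C' B) : inTP (R + R') (C + C') (A + B) :=
  ⟨fun j k => add_nonneg (hA.1 j k) (hB.1 j k),
    fun j => by simp [sum_add_distrib, hA.2.1 j, hB.2.1 j],
    fun k => by simp [sum_add_distrib, hA.2.2 k, hB.2.2 k]⟩

lemma smul {c : ℝ} (hc : 0 ≤ c) (h : inTP R C A) : inTP (c • R) (c • C) (c • A) :=
  ⟨fun j k => mul_nonneg hc (h.1 j k),
    fun j => by simp [← mul_sum, h.2.1 j],
    fun k => by simp [← mul_sum, h.2.2 k]⟩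

lemma exists_le_of_le (hA : inTP R C A) (hR : R ≤ R') (hC : C ≤ C')
    (hRC' : ∑ j, R' j = ∑ k, C' k) : ∃ B, inTP R' C' B ∧ ∀ j k, A j k ≤ B j k := by
  obtain ⟨D, hD⟩ := exists_inTP (sub_nonneg.mpr hR) (sub_nonneg.mpr hC)
    (by simp only [Pi.sub_apply, sum_sub_distrib, hRC', hA.sum_eq_sum])
  refine ⟨A + D, ?_, fun j k => le_add_of_nonneg_right (hD.1 j k)⟩
  simpa only [add_sub_cancel] using hA.add hD

end inTP

theorem g_typical_matrix_perturbed_margins_general (m n : ℕ)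
    (R : Fin m → ℝ) (C : Fin n → ℝ) (hRC : ∑ j, R j = ∑ k, C k)
    (Z : Matrix (Fin m) (Fin n) ℝ)
    (hZmem : inTP R C Z)
    (hZmax : ∀ Y, inTP R C Y → gFun Y ≤ gFun Z)
    (ε : ℝ) (hε : ε < 1 / 2)
    (R' : Fin m → ℝ) (C' : Fin n → ℝ)
    (hR' : ∀ j, (1 - ε) * R j ≤ R' j ∧ R' j ≤ R j)
    (hC' : ∀ k, (1 - ε) * C k ≤ C' k ∧ C' k ≤ C k)
    (hRC' : ∑ j, R' j = ∑ k, C' k)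
    (X : Matrix (Fin m) (Fin n) ℝ)
    (hXmem : inTP R' C' X)
    (hXmax : ∀ Y, inTP R' C' Y → gFun Y ≤ gFun X) :
    gFun ((1 - ε) • Z) ≤ gFun X ∧ gFun X ≤ gFun Z := by
  have hZε := hZmem.smul (by linarith : (0 : ℝ) ≤ 1 - ε)
  obtain ⟨Y, hY, hZY⟩ := hZε.exists_le_of_le (fun j => (hR' j).1) (fun k => (hC' k).1) hRC'
  obtain ⟨Y', hY', hXY'⟩ := hXmem.exists_le_of_le (fun j => (hR' j).2) (fun k => (hC' k).2) hRC
  exact ⟨(gFun_le_gFun hZε.1 hZY).trans (hXmax Y hY),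
    (gFun_le_gFun hXmem.1 hXY').trans (hZmax Y' hY')⟩

/-- Let `Z` be the typical matrix of margins `(R,C)` with `δτ ≤ ζ_{jk} ≤ τ`,
`0 < δ < 1/2`, `τ > 1`.  Let `0 < ε < 1/2` and let `(R',C')` be margins with
`(1−ε)r_j ≤ r_j' ≤ r_j`, `(1−ε)c_k ≤ c_k' ≤ c_k` and equal total sums, with typical
matrix `X`.  Then `g((1−ε)Z) ≤ g(X) ≤ g(Z)`. -/
theorem g_typical_matrix_perturbed_margins (m n : ℕ)
    (R : Fin m → ℝ) (C : Fin n → ℝ) (hRC : ∑ j, R j = ∑ k, C k)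
    (Z : Matrix (Fin m) (Fin n) ℝ)
    (hZmem : inTP R C Z)
    (hZmax : ∀ Y, inTP R C Y → gFun Y ≤ gFun Z)
    (δ τ : ℝ) (hδ0 : 0 < δ) (hδ : δ < 1 / 2) (hτ : 1 < τ)
    (hζ : ∀ j k, δ * τ ≤ Z j k ∧ Z j k ≤ τ)
    (ε : ℝ) (hε0 : 0 < ε) (hε : ε < 1 / 2)
    (R' : Fin m → ℝ) (C' : Fin n → ℝ)
    (hR' : ∀ j, (1 - ε) * R j ≤ R' j ∧ R' j ≤ R j)
    (hC' : ∀ k, (1 - ε) * C k ≤ C' k ∧ C' k ≤ C k)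
    (hRC' : ∑ j, R' j = ∑ k, C' k)
    (X : Matrix (Fin m) (Fin n) ℝ)
    (hXmem : inTP R' C' X)
    (hXmax : ∀ Y, inTP R' C' Y → gFun Y ≤ gFun X) :
    gFun ((1 - ε) • Z) ≤ gFun X ∧ gFun X ≤ gFun Z :=
  g_typical_matrix_perturbed_margins_general m n R C hRC Z hZmem hZmax ε hε R' C' hR' hC' hRC' X
    hXmem hXmax
end
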